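/- arXiv:1910.14369 — 2 statements merged into one kernel-verified Lean document; each statement's English description precedes it below -/
import Mathlib

section
/- For each d ≥ 1, let O^d be the set of partitions all of whose parts are ≡ ±1 (mod 4d). Then Σ_{n≥0} (−1)^{⌈n/2⌉} (o_{O^d}(n) − e_{O^d}(n)) q^n = 1/((q; q^{4d})_∞ (−q^{4d−1}; q^{4d})_∞), where o (resp. e) counts partitions in O^d of n whose index parity — parity of (op(λ) + (n mod 2))/2 − 1 — is odd (resp. even). -/
open Finset

/-- The number of odd parts of a partition. -/
def Nat.Partition.op {n : ℕ} (p : n.Partition) : ℕ :=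
  (p.parts.filter (fun x => Odd x)).card

/-- A representative of the parity of the index `ind_n(λ)` of a partition `λ` of `n`:
`ind(λ) ≡ (op(λ) + op((n)))/2 - 1 (mod 2)` where `op((n)) = n % 2`. -/
def pind (n : ℕ) (p : n.Partition) : ℤ := ((p.op : ℤ) + ((n % 2 : ℕ) : ℤ)) / 2 - 1

/-- The number of partitions of `n` lying in `S` with odd index. -/
def oCount (S : Set (Multiset ℕ)) [DecidablePred (· ∈ S)] (n : ℕ) : ℕ :=
  (univ.filter (fun p : n.Partition => p.parts ∈ S ∧ Odd (pind n p))).card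

/-- The number of partitions of `n` lying in `S` with even index. -/
def eCount (S : Set (Multiset ℕ)) [DecidablePred (· ∈ S)] (n : ℕ) : ℕ :=
  (univ.filter (fun p : n.Partition => p.parts ∈ S ∧ Even (pind n p))).card

/-- The set of partitions all of whose parts are `≡ ±1 (mod 4d)`. -/
def OParts (d : ℕ) : Set (Multiset ℕ) :=
  {s | ∀ x ∈ s, x % (4 * d) = 1 ∨ x % (4 * d) = 4 * d - 1}

instance (d : ℕ) : DecidablePred (· ∈ OParts d) := fun s => by
  unfold OParts
  exact inferInstanceAs (Decidable (∀ x ∈ s, x % (4 * d) = 1 ∨ x % (4 * d) = 4 * d - 1))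

/-!
For a partition of `m` into `k` odd parts `x`, one has `m = 2 ∑ ⌊x/2⌋ + k`, and this turns the sign
`(-1)^⌈m/2⌉ · (-(-1)^ind)` of its contribution into `∏ χ(x)`, where `χ(x) = (-1)^⌊x/2⌋` is the
nontrivial character modulo `4`. The signed series is therefore the generating function of
partitions into parts `≡ ±1 (mod 4d)` weighted multiplicatively by `χ`, that is `∏ 1/(1 - χ(x) q^x)`;
since `χ = 1` on parts `≡ 1` and `χ = -1` on parts `≡ -1 (mod 4d)`, this is
`1/((q;q^{4d})_∞ (-q^{4d-1};q^{4d})_∞)`. The coefficients up to `q^n` only involve parts `x ≤ n`.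
-/

open PowerSeries
open scoped PowerSeries.WithPiTopology

theorem PowerSeries.coeff_mul_congr_left {R : Type*} [CommSemiring R] {F G : R⟦X⟧} (H : R⟦X⟧)
    {n : ℕ} (h : ∀ k ≤ n, coeff k F = coeff k G) : coeff n (F * H) = coeff n (G * H) := by
  simp only [coeff_mul]
  refine sum_congr rfl fun x hx ↦ ?_
  rw [HasAntidiagonal.mem_antidiagonal] at hx
  rw [h x.1 (by omega)]

namespace Nat.Partition

variable {R : Type*} [CommRing R]

theorem genFun_pow_mul_prod_one_sub (w : ℕ → R) {N : ℕ} (hw : ∀ i, N < i → w i = 0) :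
    genFun (fun i c ↦ w i ^ c) * ∏ i ∈ range N, (1 - C (w (i + 1)) * X ^ (i + 1)) = 1 := by
  -- The identity is algebraic; a discrete topology on `R` only makes `genFun_eq_tprod` available.
  let _ : TopologicalSpace R := ⊥
  have : DiscreteTopology R := ⟨rfl⟩
  have hgeom (i : ℕ) : 1 + ∑' j, w (i + 1) ^ (j + 1) • (X : R⟦X⟧) ^ ((i + 1) * (j + 1)) =
      ∑' j, (C (w (i + 1)) * X ^ (i + 1)) ^ j := by
    have hs := WithPiTopology.summable_pow_of_constantCoeff_eq_zero
      (f := C (w (i + 1)) * X ^ (i + 1)) (by simp)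
    rw [hs.tsum_eq_zero_add]
    simp [smul_eq_C_mul, mul_pow, pow_mul]
  rw [genFun_eq_tprod, tprod_eq_prod (s := range N) fun i hi ↦ by
    simp [hw (i + 1) (by simpa using hi)], ← prod_mul_distrib]
  exact prod_eq_one fun i _ ↦ by
    rw [hgeom, WithPiTopology.tsum_pow_mul_one_sub_of_constantCoeff_eq_zero (by simp)]

theorem coeff_genFun_congr {f g : ℕ → ℕ → R} {n : ℕ} (h : ∀ i ≤ n, f i = g i) :
    coeff n (genFun f) = coeff n (genFun g) := by
  simp only [coeff_genFun]
  refine sum_congr rfl fun p _ ↦ Finsupp.prod_congr fun i hi ↦ ?_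
  rw [Multiset.toFinsupp_support, Multiset.mem_toFinset] at hi
  rw [h i (le_of_mem_parts hi)]

theorem coeff_genFun_pow (w : ℕ → R) (n : ℕ) :
    coeff n (genFun fun i c ↦ w i ^ c) = ∑ p : n.Partition, (p.parts.map w).prod := by
  classical
  simp only [coeff_genFun, Finsupp.prod, Multiset.toFinsupp_support, Multiset.toFinsupp_apply,
    prod_multiset_map_count]

theorem coeff_genFun_pow_mul_prod_one_sub (w : ℕ → R) {n N : ℕ} (hn : n ≤ N) :
    coeff n (genFun (fun i c ↦ w i ^ c) * ∏ i ∈ range N, (1 - C (w (i + 1)) * X ^ (i + 1))) =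
      if n = 0 then 1 else 0 := by
  classical
  set w' : ℕ → R := fun i ↦ if i ≤ N then w i else 0
  have hprod : ∏ i ∈ range N, (1 - C (w (i + 1)) * X ^ (i + 1)) =
      ∏ i ∈ range N, (1 - C (w' (i + 1)) * X ^ (i + 1)) :=
    prod_congr rfl fun i hi ↦ by simp [w', show i + 1 ≤ N by simpa using hi]
  rw [coeff_mul_congr_left _ fun k hk ↦ coeff_genFun_congr (g := fun i c ↦ w' i ^ c)
      fun i hi ↦ by simp [w', show i ≤ N by omega], hprod,
    genFun_pow_mul_prod_one_sub w' fun i hi ↦ by simp [w', not_le.mpr hi], coeff_one]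

end Nat.Partition

theorem Multiset.prod_map_pow_eq_pow_sum {M α : Type*} [CommMonoid M] (a : M) (f : α → ℕ)
    (s : Multiset α) : (s.map fun x ↦ a ^ f x).prod = a ^ (s.map f).sum :=
  Multiset.induction_on s (by simp) fun a s ih ↦ by simp [pow_add, ih]

theorem Multiset.two_mul_sum_map_div_two_add_card {s : Multiset ℕ} (hs : ∀ x ∈ s, Odd x) :
    2 * (s.map (· / 2)).sum + Multiset.card s = s.sum := by
  calc 2 * (s.map (· / 2)).sum + Multiset.card s = (s.map fun x ↦ 2 * (x / 2) + 1).sum := by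
        simp [Multiset.sum_map_add, Multiset.sum_map_mul_left]
    _ = s.sum := by
        rw [Multiset.map_congr rfl fun x hx ↦ Nat.two_mul_div_two_add_one_of_odd (hs x hx),
          Multiset.map_id']

theorem odd_pind_iff {n : ℕ} (p : n.Partition) : Odd (pind n p) ↔ Even ((p.op + n % 2) / 2) := by
  have : pind n p = (((p.op + n % 2) / 2 : ℕ) : ℤ) - 1 := by simp [pind]
  rw [this, odd_sub_one, Int.even_coe_nat]

theorem oCount_sub_eCount (S : Set (Multiset ℕ)) [DecidablePred (· ∈ S)] (n : ℕ) :
    (oCount S n : ℤ) - eCount S n =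
      ∑ p : n.Partition, if p.parts ∈ S then (-1) ^ ((p.op + n % 2) / 2) else 0 := by
  have hsplit (p : n.Partition) : (if p.parts ∈ S then (-1 : ℤ) ^ ((p.op + n % 2) / 2) else 0) =
      (if p.parts ∈ S ∧ Odd (pind n p) then 1 else 0) -
        (if p.parts ∈ S ∧ Even (pind n p) then 1 else 0) := by
    by_cases hS : p.parts ∈ S
    · rcases Int.even_or_odd (pind n p) with h | h
      · have hk : Odd ((p.op + n % 2) / 2) := by
          rwa [← Nat.not_even_iff_odd, ← odd_pind_iff, Int.not_odd_iff_even]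
        simp [hS, Int.not_odd_iff_even.mpr h, hk.neg_one_pow]
      · simp [hS, h, Int.not_even_iff_odd.mpr h, ((odd_pind_iff p).mp h).neg_one_pow]
    · simp [hS]
  simp only [hsplit, sum_sub_distrib, sum_boole, oCount, eCount]

theorem Nat.Partition.prod_map_neg_one_pow_div_two {n : ℕ} (p : n.Partition)
    (hp : ∀ x ∈ p.parts, Odd x) :
    (p.parts.map fun x ↦ (-1 : ℤ) ^ (x / 2)).prod =
      (-1) ^ ((n + 1) / 2) * (-1) ^ ((p.op + n % 2) / 2) := by
  have hop : p.op = Multiset.card p.parts := by rw [op, Multiset.filter_eq_self.mpr hp]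
  have hn := Multiset.two_mul_sum_map_div_two_add_card hp
  rw [p.parts_sum] at hn
  rw [Multiset.prod_map_pow_eq_pow_sum, ← pow_add, neg_one_pow_eq_pow_mod_two,
    neg_one_pow_eq_pow_mod_two (n := _ + _), hop]
  congr 1
  omega

noncomputable def paritySeries (S : Set (Multiset ℕ)) [DecidablePred (· ∈ S)] : ℤ⟦X⟧ :=
  PowerSeries.mk fun m ↦ (-1 : ℤ) ^ ((m + 1) / 2) * ((oCount S m : ℤ) - (eCount S m : ℤ))

def partWeight (P : ℕ → Prop) [DecidablePred P] (i : ℕ) : ℤ :=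
  if P i then (-1) ^ (i / 2) else 0

theorem paritySeries_eq_genFun {S : Set (Multiset ℕ)} [DecidablePred (· ∈ S)] {P : ℕ → Prop}
    [DecidablePred P] (hS : ∀ s, s ∈ S ↔ ∀ x ∈ s, P x) (hP : ∀ x, P x → Odd x) :
    paritySeries S = Nat.Partition.genFun fun i c ↦ partWeight P i ^ c := by
  ext n
  rw [Nat.Partition.coeff_genFun_pow, paritySeries, coeff_mk, oCount_sub_eCount, mul_sum]
  refine sum_congr rfl fun p _ ↦ ?_
  by_cases hp : p.parts ∈ S
  · have hP' := (hS _).mp hp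
    rw [if_pos hp, ← p.prod_map_neg_one_pow_div_two fun x hx ↦ hP x (hP' x hx)]
    exact congrArg _ (Multiset.map_congr rfl fun x hx ↦ (if_pos (hP' x hx)).symm)
  · obtain ⟨x, hx, hPx⟩ : ∃ x ∈ p.parts, ¬P x := by simpa [hS] using hp
    rw [if_neg hp, mul_zero, eq_comm]
    exact Multiset.prod_eq_zero (Multiset.mem_map.mpr ⟨x, hx, if_neg hPx⟩)

def IsOPart (d x : ℕ) : Prop :=
  x % (4 * d) = 1 ∨ x % (4 * d) = 4 * d - 1

instance (d : ℕ) : DecidablePred (IsOPart d) := fun x ↦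
  inferInstanceAs (Decidable (x % (4 * d) = 1 ∨ x % (4 * d) = 4 * d - 1))

theorem IsOPart.odd {d x : ℕ} (hd : 1 ≤ d) (hx : IsOPart d x) : Odd x := by
  rw [Nat.odd_iff, ← Nat.mod_mod_of_dvd x (⟨2 * d, by ring⟩ : 2 ∣ 4 * d)]
  rcases hx with h | h <;> omega

theorem prod_range_four_mul_one_sub_partWeight {d : ℕ} (hd : 1 ≤ d) (j : ℕ) :
    ∏ r ∈ range (4 * d), (1 - C (partWeight (IsOPart d) (4 * d * j + r)) * X ^ (4 * d * j + r)) =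
      (1 - X ^ (4 * d * j + 1)) * (1 + X ^ (4 * d * j + (4 * d - 1))) := by
  have hmod {r : ℕ} (hr : r < 4 * d) : (4 * d * j + r) % (4 * d) = r := by
    rw [Nat.mul_add_mod, Nat.mod_eq_of_lt hr]
  rw [prod_eq_mul 1 (4 * d - 1) (by omega) (fun r hr hne ↦ ?_) (by simp; omega) (by simp; omega)]
  · have h1 : partWeight (IsOPart d) (4 * d * j + 1) = 1 := by
      rw [partWeight, if_pos (.inl (hmod (by omega)))]
      exact Even.neg_one_pow ⟨d * j, by rw [mul_assoc]; omega⟩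
    have h2 : partWeight (IsOPart d) (4 * d * j + (4 * d - 1)) = -1 := by
      rw [partWeight, if_pos (.inr (hmod (by omega)))]
      exact Odd.neg_one_pow ⟨d * j + d - 1, by rw [mul_assoc]; omega⟩
    simp [h1, h2]
  · have : ¬IsOPart d (4 * d * j + r) := by
      rw [IsOPart, hmod (by simpa using hr)]
      omega
    simp [partWeight, this]

theorem prod_range_eq_prod_partWeight {d : ℕ} (hd : 1 ≤ d) (M : ℕ) :
    ∏ j ∈ range M, ((1 - (X : ℤ⟦X⟧) ^ (4 * d * j + 1)) * (1 + X ^ (4 * d * j + (4 * d - 1)))) =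
      ∏ i ∈ range (4 * d * M - 1), (1 - C (partWeight (IsOPart d) (i + 1)) * X ^ (i + 1)) := by
  have hunshift : ∏ j ∈ range M, ((1 - (X : ℤ⟦X⟧) ^ (4 * d * j + 1)) *
      (1 + X ^ (4 * d * j + (4 * d - 1)))) =
      ∏ i ∈ range (4 * d * M), (1 - C (partWeight (IsOPart d) i) * X ^ i) := by
    induction M with
    | zero => simp
    | succ M ih =>
      rw [prod_range_succ, ih, show 4 * d * (M + 1) = 4 * d * M + 4 * d by ring, prod_range_add,
        prod_range_four_mul_one_sub_partWeight hd]
  rcases M.eq_zero_or_pos with rfl | hM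
  · simp
  have hpos : 0 < 4 * d * M := by positivity
  obtain ⟨N, hN⟩ : ∃ N, 4 * d * M = N + 1 := ⟨4 * d * M - 1, by omega⟩
  have h0 : ¬IsOPart d 0 := by simp [IsOPart]; omega
  rw [hunshift, hN, Nat.add_sub_cancel, prod_range_succ']
  simp [partWeight, h0]

/-- The product identity is stated coefficientwise: the `n`-th coefficient only involves the
factors with `j ≤ n`. -/
theorem parity_gf_Od (d : ℕ) (hd : 1 ≤ d) :
    ∀ n : ℕ, PowerSeries.coeff (R := ℤ) n
      ((PowerSeries.mk fun m =>
          (-1 : ℤ) ^ ((m + 1) / 2) * ((oCount (OParts d) m : ℤ) - (eCount (OParts d) m : ℤ))) *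
        ∏ j ∈ range (n + 1),
          ((1 - PowerSeries.X ^ (4 * d * j + 1)) *
            (1 + PowerSeries.X ^ (4 * d * j + (4 * d - 1))))) = if n = 0 then 1 else 0 := by
  intro n
  change coeff n (paritySeries (OParts d) * _) = _
  rw [paritySeries_eq_genFun (S := OParts d) (fun _ ↦ Iff.rfl) fun _ ↦ IsOPart.odd hd,
    prod_range_eq_prod_partWeight hd]
  have : n + 1 ≤ 4 * d * (n + 1) := Nat.le_mul_of_pos_left _ (by omega)
  exact Nat.Partition.coeff_genFun_pow_mul_prod_one_sub _ (by omega)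
end

section
/- With c_n(k) = #{λ ⊢ n : op(λ) = n − 2k}, the double generating function satisfies Σ_{k,n≥0} c_n(k) t^k q^n = 1/((q; tq²)_∞ (tq²; tq²)_∞) = Π_{j≥0} 1/((1 − q (tq²)^j)(1 − tq² (tq²)^j)). -/
open Finset

/-- The conjugated index `ind_{1^n}(λ) = (op(λ) + n)/2 - 1`. -/
def cind (n : ℕ) (p : n.Partition) : ℤ := ((p.op : ℤ) + (n : ℤ)) / 2 - 1

/-- `c_n(k)`: the number of partitions `λ` of `n` with `ind_{1^n}(λ) = n - k - 1`. -/
def cnk (n k : ℕ) : ℕ :=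
  (univ.filter (fun p : n.Partition => cind n p = (n : ℤ) - k - 1)).card

/-- The double generating function `Σ_{k,n} c_n(k) t^k q^n`, as a power series in `q` whose
coefficient of `q^n` is the polynomial `Σ_k c_n(k) t^k` (note `c_n(k) = 0` for `k > n`). -/
noncomputable def Cgen : PowerSeries (Polynomial ℤ) :=
  PowerSeries.mk fun n =>
    ∑ k ∈ range (n + 1), (cnk n k : ℤ) • (Polynomial.X : Polynomial ℤ) ^ k

/-!
Since `op(λ) + 2 Σᵢ ⌊λᵢ/2⌋ = n`, `c_n(k)` counts the partitions of `n` with `Σᵢ ⌊λᵢ/2⌋ = k`, so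
the generating function is `Σ_λ t^(Σᵢ ⌊λᵢ/2⌋) q^|λ| = Πᵢ 1/(1 - t^⌊i/2⌋ qⁱ)`, a weighted Euler
product; the parts `i = 2j+1` and `i = 2j+2` give the two factors of the product. The factors
with `i > n` are `≡ 1 mod q^(n+1)`, so the infinite product may be truncated at `q^n`.
-/

open PowerSeries PowerSeries.WithPiTopology

section ClosedIdeal

variable {ι R : Type*} [CommRing R] [TopologicalSpace R] [IsTopologicalRing R] {I : Ideal R}
  {g : ι → R} {a : R}

theorem HasProd.sub_prod_mem_of_forall_sub_one_mem (hI : IsClosed (I : Set R)) (h : HasProd g a)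
    (s : Finset ι) (hg : ∀ i ∉ s, g i - 1 ∈ I) :
    a - ∏ i ∈ s, g i ∈ I := by
  have hclosed : IsClosed {x | x - ∏ i ∈ s, g i ∈ I} := hI.preimage (continuous_sub_right _)
  refine hclosed.mem_of_tendsto h (Filter.eventually_atTop.2 ⟨s, fun t hst => ?_⟩)
  rw [Set.mem_ofPred_eq, ← Ideal.Quotient.eq, map_prod, map_prod]
  refine (prod_subset hst fun i _ hi => ?_).symm
  rw [← map_one (Ideal.Quotient.mk I), Ideal.Quotient.eq]
  exact hg i hi

theorem HasProd.mul_prod_sub_one_mem (hI : IsClosed (I : Set R)) (h : HasProd g a) {u : ι → R}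
    (hgu : ∀ i, g i * u i = 1) (s : Finset ι) (hu : ∀ i ∉ s, u i - 1 ∈ I) :
    a * ∏ i ∈ s, u i - 1 ∈ I := by
  have hfactor : a * ∏ i ∈ s, u i - 1 = (a - ∏ i ∈ s, g i) * ∏ i ∈ s, u i := by
    rw [sub_mul, ← prod_mul_distrib, prod_congr rfl fun i _ => hgu i, prod_const_one]
  rw [hfactor]
  refine I.mul_mem_right _ (h.sub_prod_mem_of_forall_sub_one_mem hI s fun i hi => ?_)
  rw [show g i - 1 = -(g i * (u i - 1)) by linear_combination hgu i]
  exact I.neg_mem (I.mul_mem_left _ (hu i hi))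

end ClosedIdeal

theorem PowerSeries.isClosed_span_X_pow {R : Type*} [CommSemiring R] [TopologicalSpace R]
    [T1Space R] (m : ℕ) : IsClosed ((Ideal.span {X ^ m} : Ideal R⟦X⟧) : Set R⟦X⟧) := by
  have hspan : ((Ideal.span {X ^ m} : Ideal R⟦X⟧) : Set R⟦X⟧) = ⋂ d < m, coeff d ⁻¹' {0} := by
    ext φ
    simp [Ideal.mem_span_singleton, X_pow_dvd_iff]
  rw [hspan]
  exact isClosed_biInter fun d _ => isClosed_singleton.preimage (continuous_coeff R d)

theorem Finset.prod_range_two_mul {M : Type*} [CommMonoid M] (f : ℕ → M) (m : ℕ) :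
    ∏ i ∈ range (2 * m), f i = ∏ j ∈ range m, f (2 * j) * f (2 * j + 1) := by
  induction m with
  | zero => simp
  | succ m ih => rw [Nat.mul_succ, prod_range_succ, prod_range_succ, prod_range_succ, ih, mul_assoc]

theorem PowerSeries.prod_range_one_sub_C_pow_div_two_mul_X_pow {R : Type*} [CommRing R] (t : R)
    (m : ℕ) :
    ∏ i ∈ range (2 * m), (1 - C (t ^ ((i + 1) / 2)) * X ^ (i + 1)) =
      ∏ j ∈ range m, ((1 - C (t ^ j) * X ^ (2 * j + 1)) *
        (1 - C (t ^ (j + 1)) * X ^ (2 * j + 2))) := by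
  rw [prod_range_two_mul]
  refine prod_congr rfl fun j _ => ?_
  rw [show (2 * j + 1) / 2 = j by omega, show (2 * j + 1 + 1) / 2 = j + 1 by omega]

theorem Multiset.card_filter_odd_add_two_mul_sum_map_div_two (m : Multiset ℕ) :
    (m.filter Odd).card + 2 * (m.map (· / 2)).sum = m.sum := by
  induction m using Multiset.induction_on with
  | empty => simp
  | cons a m ih =>
    rcases Nat.even_or_odd a with ha | ha
    · have := Nat.even_iff.1 ha
      simp only [Multiset.filter_cons_of_neg _ (Nat.not_odd_iff_even.2 ha), map_cons, sum_cons]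
      omega
    · have := Nat.odd_iff.1 ha
      simp only [Multiset.filter_cons_of_pos _ ha, card_cons, map_cons, sum_cons]
      omega

namespace Nat.Partition

def halfSum {n : ℕ} (p : n.Partition) : ℕ := (p.parts.map (· / 2)).sum

theorem op_add_two_mul_halfSum {n : ℕ} (p : n.Partition) : p.op + 2 * p.halfSum = n :=
  p.parts.card_filter_odd_add_two_mul_sum_map_div_two.trans p.parts_sum

theorem hasProd_genFun_pow {R : Type*} [CommSemiring R] [TopologicalSpace R]
    [IsTopologicalSemiring R] [T2Space R] (w : ℕ → R) :
    HasProd (fun i => ∑' j, (C (w (i + 1)) * X ^ (i + 1)) ^ j) (genFun fun i c => w i ^ c) := by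
  convert hasProd_genFun (fun i c => w i ^ c) using 2 with i
  have h0 : constantCoeff (C (w (i + 1)) * X ^ (i + 1) : R⟦X⟧) = 0 := by simp
  rw [tsum_eq_zero_add' ?_, pow_zero]
  · refine congrArg _ (tsum_congr fun j => ?_)
    rw [mul_pow, ← map_pow, ← pow_mul, smul_eq_C_mul]
  · simp_rw [pow_succ]
    exact (summable_pow_of_constantCoeff_eq_zero h0).mul_right _

end Nat.Partition

open Nat.Partition

theorem cind_eq_sub_halfSum {n : ℕ} (p : n.Partition) : cind n p = n - p.halfSum - 1 := by
  have := p.op_add_two_mul_halfSum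
  unfold cind
  omega

theorem cnk_eq_card (n k : ℕ) : cnk n k = #{p : n.Partition | p.halfSum = k} := by
  unfold cnk
  congr 1
  refine filter_congr fun p _ => ?_
  rw [cind_eq_sub_halfSum]
  omega

theorem coeff_Cgen (n : ℕ) :
    coeff n Cgen = ∑ p : n.Partition, (Polynomial.X : Polynomial ℤ) ^ p.halfSum := by
  have hmaps : ∀ p ∈ (univ : Finset n.Partition), p.halfSum ∈ range (n + 1) := fun p _ => by
    have := p.op_add_two_mul_halfSum
    rw [mem_range]
    omega
  rw [Cgen, coeff_mk, ← sum_fiberwise_of_maps_to hmaps]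
  refine sum_congr rfl fun k _ => ?_
  rw [sum_congr rfl fun p hp => by rw [(mem_filter.1 hp).2], sum_const, cnk_eq_card, natCast_zsmul]

theorem Cgen_eq_genFun :
    Cgen = genFun fun i c => ((Polynomial.X : Polynomial ℤ) ^ (i / 2)) ^ c := by
  refine PowerSeries.ext fun n => ?_
  rw [coeff_Cgen, coeff_genFun]
  refine Finset.sum_congr rfl fun p _ => ?_
  simp only [Finsupp.prod, Multiset.toFinsupp_support, Multiset.toFinsupp_apply, ← pow_mul,
    prod_pow_eq_pow_sum, halfSum, sum_multiset_map_count, smul_eq_mul, mul_comm]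

/-- `Σ_{k,n} c_n(k) t^k q^n = 1/((q;tq²)_∞ (tq²;tq²)_∞) = Π_j 1/((1-q(tq²)^j)(1-tq²(tq²)^j))`:
for each `n`, the coefficient of `q^n` in the left-hand side multiplied by
`Π_{j≤n} (1 - t^j q^{2j+1})(1 - t^{j+1} q^{2j+2})` is `1` if `n = 0` and `0` otherwise. -/
theorem Cgen_eq :
    ∀ n : ℕ, PowerSeries.coeff (R := Polynomial ℤ) n
      (Cgen * ∏ j ∈ range (n + 1),
        ((1 - PowerSeries.C (R := Polynomial ℤ) (Polynomial.X ^ j) * PowerSeries.X ^ (2 * j + 1)) *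
          (1 - PowerSeries.C (R := Polynomial ℤ) (Polynomial.X ^ (j + 1)) *
            PowerSeries.X ^ (2 * j + 2)))) = if n = 0 then 1 else 0 := by
  intro n
  let _ : TopologicalSpace (Polynomial ℤ) := ⊥
  have _ : DiscreteTopology (Polynomial ℤ) := ⟨rfl⟩
  set a : ℕ → (Polynomial ℤ)⟦X⟧ := fun i => C (Polynomial.X ^ ((i + 1) / 2)) * X ^ (i + 1)
  have hprod : HasProd (fun i => ∑' j, a i ^ j) Cgen := by
    rw [Cgen_eq_genFun]
    exact hasProd_genFun_pow fun i => Polynomial.X ^ (i / 2)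
  have htrunc := hprod.mul_prod_sub_one_mem (isClosed_span_X_pow (n + 1))
    (fun i => tsum_pow_mul_one_sub_of_constantCoeff_eq_zero (by simp [a])) (range (2 * (n + 1)))
    fun i hi => by
      rw [sub_sub_cancel_left, neg_mem_iff, Ideal.mem_span_singleton]
      exact (pow_dvd_pow X (by rw [mem_range] at hi; omega)).mul_left _
  rw [← prod_range_one_sub_C_pow_div_two_mul_X_pow, ← coeff_one, ← sub_eq_zero, ← map_sub]
  exact X_pow_dvd_iff.1 (Ideal.mem_span_singleton.1 htrunc) n n.lt_succ_self
end
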